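/- Let Σ be a compact surface with boundary contained in the sphere ∂B_{r0} ⊂ ℝ³ (Σ ⊂ closure of B_{r0}, 0 ∈ Σ), and let |A| denote a continuous nonnegative function on Σ vanishing on ∂Σ with sup over B_{r0/2} ∩ Σ of |A|² at least 16 C² r0^{−2}. Then there exist y ∈ Σ and r1 > 0 with r1 < r0 − |y| such that |A|²(y) = C² r1^{−2} and sup over B_{r1}(y) ∩ Σ of |A|² ≤ 4 C² r1^{−2}. -/

import Mathlib

open Real Set Metric

/-!
Maximize the weight `F x = (r₀ - ‖x‖) * |a x|` over the compact set `Σ`, at `y`. The hypothesis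
gives `F y ≥ 2C`, so the radius `r₁ = C / |a y|` fits twice into `r₀ - ‖y‖`. On `B_{r₁}(y)` the
factor `r₀ - ‖·‖` is at least half its value at `y`, so maximality of `F` bounds `|a|` there by
`2 |a y|`.
-/

section PointSelection

variable {E : Type*} [SeminormedAddCommGroup E] {S : Set E} {a : E → ℝ} {r₀ C : ℝ} {x y z : E}

lemma two_mul_le_weight_of_sq_le (hr₀ : 0 < r₀) (hx : ‖x‖ ≤ r₀ / 2)
    (hax : 16 * C ^ 2 / r₀ ^ 2 ≤ a x ^ 2) : 2 * C ≤ (r₀ - ‖x‖) * |a x| := by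
  have habs : 4 * C / r₀ ≤ |a x| :=
    (le_abs_self _).trans (sq_le_sq.mp (by rw [div_pow, mul_pow]; norm_num; exact hax))
  calc 2 * C = r₀ / 2 * (4 * C / r₀) := by field_simp; ring
    _ ≤ r₀ / 2 * |a x| := by gcongr
    _ ≤ (r₀ - ‖x‖) * |a x| := by gcongr; linarith

lemma abs_le_two_mul_abs_of_isMaxOn_weight
    (hmax : IsMaxOn (fun x ↦ (r₀ - ‖x‖) * |a x|) S y) (hz : z ∈ S)
    (hzy : ‖z - y‖ ≤ (r₀ - ‖y‖) / 2) (hy : 0 < r₀ - ‖y‖) : |a z| ≤ 2 * |a y| := by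
  have hweight : (r₀ - ‖y‖) / 2 ≤ r₀ - ‖z‖ := by
    linarith [norm_le_norm_add_norm_sub' z y]
  have hFz : (r₀ - ‖z‖) * |a z| ≤ (r₀ - ‖y‖) * |a y| := hmax hz
  have : (r₀ - ‖y‖) / 2 * |a z| ≤ (r₀ - ‖y‖) / 2 * (2 * |a y|) := by
    calc (r₀ - ‖y‖) / 2 * |a z| ≤ (r₀ - ‖z‖) * |a z| := by gcongr
      _ ≤ (r₀ - ‖y‖) / 2 * (2 * |a y|) := by linarith
  exact le_of_mul_le_mul_left this (by linarith)

lemma exists_radius_of_isMaxOn_weight (hC : 0 < C)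
    (hmax : IsMaxOn (fun x ↦ (r₀ - ‖x‖) * |a x|) S y) (hFy : 2 * C ≤ (r₀ - ‖y‖) * |a y|) :
    ∃ r₁ : ℝ, 0 < r₁ ∧ r₁ < r₀ - ‖y‖ ∧ a y ^ 2 = C ^ 2 / r₁ ^ 2 ∧
      ∀ z ∈ S ∩ ball y r₁, a z ^ 2 ≤ 4 * C ^ 2 / r₁ ^ 2 := by
  have hay : 0 < |a y| := by
    refine (abs_nonneg _).lt_of_ne fun h ↦ ?_
    rw [← h, mul_zero] at hFy
    linarith
  have hy : 0 < r₀ - ‖y‖ := pos_of_mul_pos_left (by linarith) hay.le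
  have htwice : 2 * (C / |a y|) ≤ r₀ - ‖y‖ := by
    rw [← mul_div_assoc, div_le_iff₀ hay]
    exact hFy
  have hr₁ : 0 < C / |a y| := by positivity
  have hsq : C ^ 2 / (C / |a y|) ^ 2 = a y ^ 2 := by
    rw [← sq_abs (a y)]
    field_simp
  refine ⟨C / |a y|, hr₁, by linarith, hsq.symm, ?_⟩
  rintro z ⟨hz, hzy⟩
  rw [mem_ball, dist_eq_norm] at hzy
  have hbound := abs_le_two_mul_abs_of_isMaxOn_weight hmax hz (by linarith) hy
  calc a z ^ 2 = |a z| ^ 2 := (sq_abs _).symm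
    _ ≤ (2 * |a y|) ^ 2 := by gcongr
    _ = 4 * C ^ 2 / (C / |a y|) ^ 2 := by rw [mul_div_assoc, hsq, mul_pow, sq_abs]; norm_num

end PointSelection

theorem blow_up_point_selection_general
    (Sig : Set (EuclideanSpace ℝ (Fin 3))) (a : EuclideanSpace ℝ (Fin 3) → ℝ)
    (r0 C : ℝ) (hr0 : 0 < r0) (hC : 0 < C)
    (hcomp : IsCompact Sig)
    (hcont : ContinuousOn a Sig)
    (hbig : ∃ x ∈ Sig ∩ Metric.closedBall 0 (r0 / 2), 16 * C ^ 2 / r0 ^ 2 ≤ (a x) ^ 2) :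
    ∃ y ∈ Sig, ∃ r1 : ℝ, 0 < r1 ∧ r1 < r0 - ‖y‖ ∧ (a y) ^ 2 = C ^ 2 / r1 ^ 2 ∧
      ∀ z ∈ Sig ∩ Metric.ball y r1, (a z) ^ 2 ≤ 4 * C ^ 2 / r1 ^ 2 := by
  obtain ⟨x, ⟨hx, hxball⟩, hax⟩ := hbig
  rw [mem_closedBall_zero_iff] at hxball
  have hFcont : ContinuousOn (fun x ↦ (r0 - ‖x‖) * |a x|) Sig :=
    (continuous_const.sub continuous_norm).continuousOn.mul hcont.abs
  obtain ⟨y, hy, hmax⟩ := hcomp.exists_isMaxOn ⟨x, hx⟩ hFcont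
  have hFy : 2 * C ≤ (r0 - ‖y‖) * |a y| :=
    (two_mul_le_weight_of_sq_le hr0 hxball hax).trans (hmax hx)
  exact ⟨y, hy, exists_radius_of_isMaxOn_weight hC hmax hFy⟩

/-- the point-selection (blow up) lemma.  `Sig` is a compact
surface in the closed ball `B̄_{r0} ⊂ ℝ³` containing `0`, whose boundary lies
in the sphere `∂B_{r0}`; `a` abstracts the curvature function `|A|`, which is
continuous, nonnegative, and vanishes on `∂Σ ⊂ ∂B_{r0}`.  If
`sup_{B_{r0/2} ∩ Σ} |A|² ≥ 16 C² r0⁻²` (attained at some point by compactness),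
then there are `y ∈ Σ` and `0 < r1 < r0 - |y|` with `|A|²(y) = C² r1⁻²` and
`sup_{B_{r1}(y) ∩ Σ} |A|² ≤ 4 C² r1⁻²`. -/
theorem blow_up_point_selection
    (Sig : Set (EuclideanSpace ℝ (Fin 3))) (a : EuclideanSpace ℝ (Fin 3) → ℝ)
    (r0 C : ℝ) (hr0 : 0 < r0) (hC : 0 < C)
    (hcomp : IsCompact Sig) (hsub : Sig ⊆ Metric.closedBall 0 r0)
    (h0 : (0 : EuclideanSpace ℝ (Fin 3)) ∈ Sig)
    (hcont : ContinuousOn a Sig)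
    (hnonneg : ∀ x ∈ Sig, 0 ≤ a x)
    (hvanish : ∀ x ∈ Sig, ‖x‖ = r0 → a x = 0)
    (hbig : ∃ x ∈ Sig ∩ Metric.closedBall 0 (r0 / 2), 16 * C ^ 2 / r0 ^ 2 ≤ (a x) ^ 2) :
    ∃ y ∈ Sig, ∃ r1 : ℝ, 0 < r1 ∧ r1 < r0 - ‖y‖ ∧ (a y) ^ 2 = C ^ 2 / r1 ^ 2 ∧
      ∀ z ∈ Sig ∩ Metric.ball y r1, (a z) ^ 2 ≤ 4 * C ^ 2 / r1 ^ 2 :=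
  blow_up_point_selection_general Sig a r0 C hr0 hC hcomp hcont hbig
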